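/- arXiv:2506.00567 — 8 statements merged into one kernel-verified Lean document; each statement's English description precedes it below -/
import Mathlib

section
/- Let H be a complex separable Hilbert space and T a bounded linear operator on H. There exists a sequence of vectors (v_i)_{i∈ℕ} in H such that the family {Tⁿ v_i : i ∈ ℕ, n ≥ 0} is a Parseval frame of H if and only if ‖T‖ ≤ 1 and for every v ∈ H the iterates (T*)ⁿ v converge to 0 as n → ∞. -/
/-!
With `A = T†`, the frame identity for the orbits `Tⁿ vᵢ` reads `∑ₙ c(Aⁿ x) = ‖x‖²`, where
`c y = ∑ᵢ |⟪y, vᵢ⟫|²`. Applying it to `A x` and shifting the sum forces `c y = ‖y‖² - ‖A y‖²`;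
then the identity is a telescoping sum of `‖Aⁿ x‖² - ‖Aⁿ⁺¹ x‖²`, which converges to `‖x‖²`
exactly when `Aⁿ x → 0`. Conversely, if `‖T‖ ≤ 1` the defect `‖y‖² - ‖A y‖²` is `‖S y‖²` for
`S = √(1 - T T†)`, and `vᵢ = S eᵢ` for a Parseval frame `(eᵢ)` gives `c y = ‖S y‖²`.
-/

open scoped ComplexInnerProductSpace InnerProductSpace

open Filter Topology

theorem hasSum_sub_succ_iff_tendsto_zero {u : ℕ → ℝ} (hu : ∀ n, u (n + 1) ≤ u n) :
    HasSum (fun n => u n - u (n + 1)) (u 0) ↔ Tendsto u atTop (𝓝 0) := by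
  rw [hasSum_iff_tendsto_nat_of_nonneg fun n => sub_nonneg.2 (hu n)]
  simp_rw [Finset.sum_range_sub']
  refine ⟨fun h => ?_, fun h => ?_⟩ <;> simpa using tendsto_const_nhds (x := u 0) |>.sub h

theorem tendsto_norm_sq_zero_iff {α E : Type*} [SeminormedAddGroup E] {l : Filter α}
    {f : α → E} : Tendsto (fun a => ‖f a‖ ^ 2) l (𝓝 0) ↔ Tendsto f l (𝓝 0) := by
  refine ⟨fun h => tendsto_zero_iff_norm_tendsto_zero.2 ?_, fun h => ?_⟩
  · simpa [Real.sqrt_sq (norm_nonneg _)] using h.sqrt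
  · simpa using (tendsto_zero_iff_norm_tendsto_zero.1 h).pow 2

theorem hasSum_prod_iff_of_nonneg {β γ : Type*} {f : β × γ → ℝ} (hf : 0 ≤ f) {g : β → ℝ}
    (hg : ∀ b, HasSum (fun c => f (b, c)) (g b)) {a : ℝ} : HasSum f a ↔ HasSum g a := by
  refine ⟨fun h => h.prod_fiberwise hg, fun h => ?_⟩
  have hfs : Summable f := (summable_prod_of_nonneg hf).2
    ⟨fun b => (hg b).summable, by simpa only [fun b => (hg b).tsum_eq] using h.summable⟩
  rw [h.unique (hfs.hasSum.prod_fiberwise hg)]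
  exact hfs.hasSum

section Defect

variable {R E : Type*} [Semiring R] [SeminormedAddCommGroup E] [Module R E] (A : E →L[R] E)
  {c : E → ℝ}

theorem eq_norm_sq_sub_of_forall_hasSum_pow_apply
    (h : ∀ x, HasSum (fun n => c ((A ^ n) x)) (‖x‖ ^ 2)) (y : E) :
    c y = ‖y‖ ^ 2 - ‖A y‖ ^ 2 := by
  have h₁ : HasSum (fun n => c ((A ^ (n + 1)) y)) (‖y‖ ^ 2 - c y) := by
    simpa using (hasSum_nat_add_iff' 1).2 (h y)
  have h₂ : HasSum (fun n => c ((A ^ (n + 1)) y)) (‖A y‖ ^ 2) := by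
    simpa [pow_succ] using h (A y)
  linarith [h₁.unique h₂]

theorem hasSum_pow_apply_iff_tendsto_zero (hc : ∀ y, 0 ≤ c y)
    (hdef : ∀ y, c y = ‖y‖ ^ 2 - ‖A y‖ ^ 2) (x : E) :
    HasSum (fun n => c ((A ^ n) x)) (‖x‖ ^ 2) ↔ Tendsto (fun n => (A ^ n) x) atTop (𝓝 0) := by
  have hstep : ∀ n, c ((A ^ n) x) = ‖(A ^ n) x‖ ^ 2 - ‖(A ^ (n + 1)) x‖ ^ 2 := fun n => by
    rw [hdef, pow_succ' A n]
    rfl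
  simp_rw [hstep, ← tendsto_norm_sq_zero_iff (f := fun n => (A ^ n) x)]
  simpa using hasSum_sub_succ_iff_tendsto_zero (u := fun n => ‖(A ^ n) x‖ ^ 2)
    fun n => sub_nonneg.1 (hstep n ▸ hc _)

end Defect

section Frame

variable {𝕜 E ι : Type*} [RCLike 𝕜] [NormedAddCommGroup E] [InnerProductSpace 𝕜 E]

variable (𝕜) in
def IsParsevalFrame (x : ι → E) : Prop :=
  ∀ y, HasSum (fun k => ‖⟪y, x k⟫_𝕜‖ ^ 2) (‖y‖ ^ 2)

theorem isParsevalFrame_iff_tsum {x : ι → E} :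
    IsParsevalFrame 𝕜 x ↔ ∀ y, ∑' k, ‖⟪y, x k⟫_𝕜‖ ^ 2 = ‖y‖ ^ 2 := by
  refine ⟨fun h y => (h y).tsum_eq, fun h y => ?_⟩
  by_cases hs : Summable fun k => ‖⟪y, x k⟫_𝕜‖ ^ 2
  · exact hs.hasSum_iff.2 (h y)
  · obtain rfl : y = 0 := by simpa [tsum_eq_zero_of_not_summable hs, eq_comm] using h y
    simp

theorem Orthonormal.countable [TopologicalSpace.SeparableSpace E] {v : ι → E}
    (hv : Orthonormal 𝕜 v) : Countable ι := by
  refine Pairwise.countable_of_isOpen_disjoint (s := fun i => Metric.ball (v i) (1 / 2))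
    (fun i j hij => Metric.ball_disjoint_ball ?_) (fun _ => Metric.isOpen_ball)
    (fun i => ⟨v i, Metric.mem_ball_self (by norm_num)⟩)
  have : ‖v i - v j‖ ^ 2 = 2 := by
    rw [@norm_sub_sq 𝕜, hv.2 hij, hv.1 i, hv.1 j]
    norm_num
  rw [dist_eq_norm]
  nlinarith [norm_nonneg (v i - v j)]

theorem HilbertBasis.isParsevalFrame (b : HilbertBasis ι 𝕜 E) : IsParsevalFrame 𝕜 b := by
  intro y
  simpa [b.repr_apply_apply, norm_inner_symm] using
    lp.hasSum_norm (p := 2) (by norm_num) (b.repr y)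

variable (𝕜 E) in
theorem exists_isParsevalFrame_nat [CompleteSpace E] [TopologicalSpace.SeparableSpace E] :
    ∃ e : ℕ → E, IsParsevalFrame 𝕜 e := by
  obtain ⟨w, b, -⟩ := exists_hilbertBasis 𝕜 E
  have := b.orthonormal.countable
  obtain ⟨f, hf⟩ := exists_injective_nat w
  refine ⟨Function.extend f b 0, fun y => ?_⟩
  have hextend : (fun n => ‖⟪y, Function.extend f b 0 n⟫_𝕜‖ ^ 2) =
      Function.extend f (fun i => ‖⟪y, b i⟫_𝕜‖ ^ 2) 0 := by
    ext n
    rw [Function.apply_extend (fun z => ‖⟪y, z⟫_𝕜‖ ^ 2)]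
    simp [Function.comp_def, Pi.zero_def]
  rw [hextend, hasSum_extend_zero hf]
  exact b.isParsevalFrame y

variable [CompleteSpace E]

theorem inner_pow_apply_eq_inner_adjoint_pow (T : E →L[𝕜] E) (n : ℕ) (x y : E) :
    ⟪x, (T ^ n) y⟫_𝕜 = ⟪(ContinuousLinearMap.adjoint T ^ n) x, y⟫_𝕜 := by
  rw [← ContinuousLinearMap.star_eq_adjoint, ← star_pow, ContinuousLinearMap.star_eq_adjoint,
    ContinuousLinearMap.adjoint_inner_left]

theorem isParsevalFrame_orbits_iff (T : E →L[𝕜] E) {v : ι → E} {c : E → ℝ}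
    (hv : ∀ y, HasSum (fun i => ‖⟪y, v i⟫_𝕜‖ ^ 2) (c y)) :
    IsParsevalFrame 𝕜 (fun p : ι × ℕ => (T ^ p.2) (v p.1)) ↔
      ∀ x, HasSum (fun n => c ((ContinuousLinearMap.adjoint T ^ n) x)) (‖x‖ ^ 2) := by
  refine forall_congr' fun x => ?_
  simp_rw [inner_pow_apply_eq_inner_adjoint_pow]
  rw [← (Equiv.prodComm ℕ ι).hasSum_iff]
  refine hasSum_prod_iff_of_nonneg
    (f := fun q : ℕ × ι => ‖⟪(ContinuousLinearMap.adjoint T ^ q.1) x, v q.2⟫_𝕜‖ ^ 2)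
    (fun _ => sq_nonneg _) fun n => ?_
  exact hv ((ContinuousLinearMap.adjoint T ^ n) x)

end Frame

theorem exists_isSelfAdjoint_norm_apply_sq_eq_sub {H : Type*} [NormedAddCommGroup H]
    [InnerProductSpace ℂ H] [CompleteSpace H] {T : H →L[ℂ] H} (hT : ‖T‖ ≤ 1) :
    ∃ S : H →L[ℂ] H, IsSelfAdjoint S ∧
      ∀ y, ‖S y‖ ^ 2 = ‖y‖ ^ 2 - ‖ContinuousLinearMap.adjoint T y‖ ^ 2 := by
  have hD : 0 ≤ 1 - T * star T := by
    rw [sub_nonneg, ← CStarAlgebra.norm_le_one_iff_of_nonneg _ (mul_star_self_nonneg T),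
      CStarRing.norm_self_mul_star]
    exact mul_le_one₀ hT (norm_nonneg T) hT
  set S := CFC.sqrt (1 - T * star T)
  have hS : IsSelfAdjoint S := (CFC.sqrt_nonneg _).isSelfAdjoint
  refine ⟨S, hS, fun y => ?_⟩
  rw [ContinuousLinearMap.apply_norm_sq_eq_inner_adjoint_left,
    ← ContinuousLinearMap.star_eq_adjoint, hS.star_eq, ← ContinuousLinearMap.mul_def,
    CFC.sqrt_mul_sqrt_self _ hD, ContinuousLinearMap.apply_norm_sq_eq_inner_adjoint_left]
  simp [inner_sub_left, ← ContinuousLinearMap.star_eq_adjoint, ← Complex.ofReal_pow]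

/-- An operator `T` on a complex separable Hilbert space admits a
Parseval frame of iterations `{Tⁿ vᵢ}` iff `‖T‖ ≤ 1` and `(T*)ⁿ v → 0` for all `v`. -/
theorem parseval_frame_of_iterations_iff
    (H : Type*) [NormedAddCommGroup H] [InnerProductSpace ℂ H]
    [CompleteSpace H] [TopologicalSpace.SeparableSpace H]
    (T : H →L[ℂ] H) :
    (∃ v : ℕ → H, ∀ x : H,
        ∑' p : ℕ × ℕ, ‖⟪x, (T ^ p.2) (v p.1)⟫‖ ^ 2 = ‖x‖ ^ 2) ↔
      (‖T‖ ≤ 1 ∧ ∀ v : H,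
        Filter.Tendsto (fun n : ℕ => ((ContinuousLinearMap.adjoint T) ^ n) v)
          Filter.atTop (nhds 0)) := by
  constructor
  · rintro ⟨v, hv⟩
    replace hv := isParsevalFrame_iff_tsum.2 hv
    obtain ⟨c, hrow⟩ : ∃ c : H → ℝ, ∀ y, HasSum (fun i => ‖⟪y, v i⟫‖ ^ 2) (c y) :=
      ⟨fun y => ∑' i, ‖⟪y, v i⟫‖ ^ 2, fun y => by
        refine Summable.hasSum ?_
        simpa [Function.comp_def] using (hv y).summable.comp_injective (Prod.mk_left_injective 0)⟩
    have hiter := (isParsevalFrame_orbits_iff T hrow).1 hv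
    have hdef := eq_norm_sq_sub_of_forall_hasSum_pow_apply _ hiter
    have hc (y : H) : 0 ≤ c y := (hrow y).nonneg fun _ => sq_nonneg _
    refine ⟨?_, fun x => (hasSum_pow_apply_iff_tendsto_zero _ hc hdef x).1 (hiter x)⟩
    rw [← ContinuousLinearMap.adjoint.norm_map T, ContinuousLinearMap.opNorm_le_iff zero_le_one]
    intro y
    rw [one_mul, ← pow_le_pow_iff_left₀ (norm_nonneg _) (norm_nonneg _) two_ne_zero]
    linarith [hdef y ▸ hc y]
  · rintro ⟨hT, hstab⟩
    obtain ⟨S, hS, hSnorm⟩ := exists_isSelfAdjoint_norm_apply_sq_eq_sub hT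
    obtain ⟨e, he⟩ := exists_isParsevalFrame_nat ℂ H
    have hrow (y : H) : HasSum (fun i => ‖⟪y, S (e i)⟫‖ ^ 2) (‖S y‖ ^ 2) := by
      simpa only [← ContinuousLinearMap.adjoint_inner_right, hS.adjoint_eq] using he (S y)
    refine ⟨fun i => S (e i), isParsevalFrame_iff_tsum.1 ((isParsevalFrame_orbits_iff T hrow).2
      fun x => (hasSum_pow_apply_iff_tendsto_zero _ (fun _ => sq_nonneg _) hSnorm x).2 (hstab x))⟩
end

section
/- Let H be a complex Hilbert space and T a bounded operator on H with ‖T‖ ≤ 1 such that (T*)ⁿ v → 0 as n → ∞ for every v ∈ H. Let D = (I − T T*)^{1/2} be the positive square root of I − T T*. Then for every v ∈ H one has ∑_{n≥0} ‖D((T*)ⁿ v)‖² = ‖v‖² (so the map v ↦ (D(T*)ⁿ v)_{n≥0} is an isometry into ℓ²(ℕ, H)). -/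
open scoped ComplexInnerProductSpace

/-- Let `T` be a contraction with strongly stable adjoint and let
`D = (I − T T*)^{1/2}` (characterized as the positive operator whose square is
`I − T T*`). Then `∑ₙ ‖D((T*)ⁿ v)‖² = ‖v‖²` for every `v`. -/
theorem defect_operator_isometry
    (H : Type*) [NormedAddCommGroup H] [InnerProductSpace ℂ H] [CompleteSpace H]
    (T : H →L[ℂ] H) (hT : ‖T‖ ≤ 1)
    (hstable : ∀ v : H,
      Filter.Tendsto (fun n : ℕ => ((ContinuousLinearMap.adjoint T) ^ n) v)
        Filter.atTop (nhds 0))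
    (D : H →L[ℂ] H) (hDpos : D.IsPositive)
    (hD2 : D * D = 1 - T * ContinuousLinearMap.adjoint T) :
    ∀ v : H, ∑' n : ℕ, ‖D (((ContinuousLinearMap.adjoint T) ^ n) v)‖ ^ 2 = ‖v‖ ^ 2 := by
  set S := ContinuousLinearMap.adjoint T with hS
  have hDsa : ContinuousLinearMap.adjoint D = D := hDpos.isSelfAdjoint
  have key : ∀ w : H, ‖D w‖ ^ 2 = ‖w‖ ^ 2 - ‖S w‖ ^ 2 := by
    intro w
    have h1 : D (D w) = w - T (S w) := by
      have := congrArg (fun A : H →L[ℂ] H => A w) hD2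
      simpa using this
    have h2 : (⟪D (D w), w⟫ : ℂ) = ⟪D w, D w⟫ := by
      nth_rewrite 1 [← hDsa]
      rw [ContinuousLinearMap.adjoint_inner_left]
    have h3 : (⟪T (S w), w⟫ : ℂ) = ⟪S w, S w⟫ := by
      have : T = ContinuousLinearMap.adjoint S := by
        rw [hS, ContinuousLinearMap.adjoint_adjoint]
      rw [this, ContinuousLinearMap.adjoint_inner_left]
    have h4 : (⟪D w, D w⟫ : ℂ) = ⟪w, w⟫ - ⟪S w, S w⟫ := by
      rw [← h2, h1, inner_sub_left, h3]
    have h4' : ((‖D w‖ ^ 2 : ℝ) : ℂ) = ((‖w‖ ^ 2 : ℝ) : ℂ) - ((‖S w‖ ^ 2 : ℝ) : ℂ) := by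
      simpa [inner_self_eq_norm_sq_to_K] using h4
    exact_mod_cast h4'
  intro v
  have hsum : Filter.Tendsto (fun N : ℕ =>
      ∑ n ∈ Finset.range N, ‖D ((S ^ n) v)‖ ^ 2) Filter.atTop (nhds (‖v‖ ^ 2)) := by
    have heq : ∀ N : ℕ, ∑ n ∈ Finset.range N, ‖D ((S ^ n) v)‖ ^ 2
        = ‖v‖ ^ 2 - ‖(S ^ N) v‖ ^ 2 := by
      intro N
      have : ∀ n ∈ Finset.range N, ‖D ((S ^ n) v)‖ ^ 2
          = ‖(S ^ n) v‖ ^ 2 - ‖(S ^ (n + 1)) v‖ ^ 2 := by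
        intro n _
        rw [key ((S ^ n) v)]
        congr 2
        rw [pow_succ']
        rfl
      rw [Finset.sum_congr rfl this, Finset.sum_range_sub' (fun n => ‖(S ^ n) v‖ ^ 2)]
      simp
    simp only [heq]
    have h0 : Filter.Tendsto (fun N : ℕ => ‖(S ^ N) v‖ ^ 2) Filter.atTop (nhds 0) := by
      have := (hstable v).norm
      simpa using (this.pow 2)
    simpa using (tendsto_const_nhds (x := ‖v‖ ^ 2)).sub h0
  have : HasSum (fun n : ℕ => ‖D ((S ^ n) v)‖ ^ 2) (‖v‖ ^ 2) :=
    (hasSum_iff_tendsto_nat_of_nonneg (fun n => by positivity) _).2 hsum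
  exact this.tsum_eq
end

section
/- Let H be a complex Hilbert space and T a bounded operator on H with ‖T‖ ≤ 1 such that (T*)ⁿ v → 0 as n → ∞ for every v ∈ H. Let D = (I − T T*)^{1/2} and let K be the closure of the range of D. If (g_i)_{i∈I} is a family of vectors of K such that A‖f‖² ≤ ∑_{i∈I} |⟨f, g_i⟩|² ≤ B‖f‖² for all f ∈ K (for some constants A, B > 0), then {Tⁿ (D g_i) : i ∈ I, n ≥ 0} is a frame of H with the same bounds A, B, i.e., A‖f‖² ≤ ∑_{i∈I, n≥0} |⟨f, Tⁿ D g_i⟩|² ≤ B‖f‖² for all f ∈ H. -/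
/-!
Write `S = T*`. Since `D` is self-adjoint, `⟪f, Tⁿ D g⟫ = ⟪D Sⁿ f, g⟫`, so the frame inequalities on
`K ∋ D Sⁿ f` bound the `n`-th slice of the double sum between `A ‖D Sⁿ f‖²` and `B ‖D Sⁿ f‖²`.
From `D² = I - S* S` we get `‖D Sⁿ f‖² = ‖Sⁿ f‖² - ‖Sⁿ⁺¹ f‖²`, which telescopes to `‖f‖²` because
`Sⁿ f → 0`.
-/

open scoped ComplexInnerProductSpace InnerProductSpace

open Filter Topology ContinuousLinearMap

theorem hasSum_sub_succ_of_tendsto {a : ℕ → ℝ} {l : ℝ} (ha : ∀ n, a (n + 1) ≤ a n)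
    (hl : Tendsto a atTop (𝓝 l)) : HasSum (fun n => a n - a (n + 1)) (a 0 - l) := by
  rw [hasSum_iff_tendsto_nat_of_nonneg fun n => sub_nonneg.2 (ha n)]
  simpa only [Finset.sum_range_sub'] using hl.const_sub (a 0)

theorem summable_of_pos_le_tsum {ι : Type*} {u : ι → ℝ} {c : ℝ} (hc : 0 < c)
    (h : c ≤ ∑' i, u i) : Summable u := by
  by_contra hu
  rw [tsum_eq_zero_of_not_summable hu] at h
  exact hc.not_ge h

section FrameSums

variable {𝕜 E ι : Type*} [RCLike 𝕜] [NormedAddCommGroup E] [InnerProductSpace 𝕜 E]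

theorem summable_norm_inner_sq_of_le_tsum {g : ι → E} {A : ℝ} (hA : 0 < A) {x : E}
    (hx : A * ‖x‖ ^ 2 ≤ ∑' i, ‖⟪x, g i⟫_𝕜‖ ^ 2) : Summable fun i => ‖⟪x, g i⟫_𝕜‖ ^ 2 := by
  rcases eq_or_ne x 0 with rfl | hx0
  · simp
  · exact summable_of_pos_le_tsum (by positivity) hx

theorem tsum_prod_swap_of_nonneg {β γ : Type*} {u : β × γ → ℝ} (hu : 0 ≤ u)
    (hfib : ∀ c, Summable fun b => u (b, c)) (hsum : Summable fun c => ∑' b, u (b, c)) :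
    ∑' p, u p = ∑' c, ∑' b, u (b, c) := by
  have hswap : Summable (u ∘ Prod.swap) :=
    (summable_prod_of_nonneg fun p => hu p.swap).2 ⟨hfib, hsum⟩
  rw [← (Equiv.prodComm γ β).tsum_eq u]
  exact hswap.tsum_prod' hfib

theorem frame_bounds_tsum_prod {K : Set E} {g : ι → E} {A B : ℝ} (hA : 0 < A)
    (hframe : ∀ f ∈ K, A * ‖f‖ ^ 2 ≤ ∑' i, ‖⟪f, g i⟫_𝕜‖ ^ 2 ∧
      ∑' i, ‖⟪f, g i⟫_𝕜‖ ^ 2 ≤ B * ‖f‖ ^ 2)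
    {x : ℕ → E} (hxK : ∀ n, x n ∈ K) {s : ℝ} (hs : HasSum (fun n => ‖x n‖ ^ 2) s) :
    A * s ≤ ∑' p : ι × ℕ, ‖⟪x p.2, g p.1⟫_𝕜‖ ^ 2 ∧
      ∑' p : ι × ℕ, ‖⟪x p.2, g p.1⟫_𝕜‖ ^ 2 ≤ B * s := by
  set F : ℕ → ℝ := fun n => ∑' i, ‖⟪x n, g i⟫_𝕜‖ ^ 2
  have hlower n : A * ‖x n‖ ^ 2 ≤ F n := (hframe _ (hxK n)).1
  have hupper n : F n ≤ B * ‖x n‖ ^ 2 := (hframe _ (hxK n)).2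
  have hF : Summable F :=
    (hs.summable.mul_left B).of_nonneg_of_le (fun n => tsum_nonneg fun _ => by positivity) hupper
  have hfib n : Summable fun i => ‖⟪x n, g i⟫_𝕜‖ ^ 2 :=
    summable_norm_inner_sq_of_le_tsum (𝕜 := 𝕜) hA (hframe _ (hxK n)).1
  have hswap : ∑' p : ι × ℕ, ‖⟪x p.2, g p.1⟫_𝕜‖ ^ 2 = ∑' n, F n :=
    tsum_prod_swap_of_nonneg (u := fun p : ι × ℕ => ‖⟪x p.2, g p.1⟫_𝕜‖ ^ 2)
      (fun _ => by positivity) hfib hF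
  rw [hswap, ← (hs.mul_left A).tsum_eq, ← (hs.mul_left B).tsum_eq]
  exact ⟨(hs.mul_left A).summable.tsum_le_tsum hlower hF,
    hF.tsum_le_tsum hupper (hs.mul_left B).summable⟩

end FrameSums

section Defect

variable {𝕜 E : Type*} [RCLike 𝕜] [NormedAddCommGroup E] [InnerProductSpace 𝕜 E] [CompleteSpace E]
  {T D : E →L[𝕜] E}

theorem inner_pow_apply_eq_inner_adjoint_pow_s6 (hD : IsSelfAdjoint D) (n : ℕ) (f x : E) :
    ⟪f, (T ^ n) (D x)⟫_𝕜 = ⟪D ((adjoint T ^ n) f), x⟫_𝕜 := by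
  rw [← adjoint_inner_left, ← star_eq_adjoint, star_pow, star_eq_adjoint]
  exact (hD.isSymmetric _ _).symm

theorem norm_sq_defect_apply (hD : IsSelfAdjoint D) (hD2 : D * D = 1 - T * adjoint T) (x : E) :
    ‖D x‖ ^ 2 = ‖x‖ ^ 2 - ‖adjoint T x‖ ^ 2 := by
  rw [apply_norm_sq_eq_inner_adjoint_right, apply_norm_sq_eq_inner_adjoint_right, adjoint_adjoint,
    hD.adjoint_eq, ← mul_def, ← mul_def, hD2, sub_apply, one_apply_eq_self,
    inner_sub_right, map_sub, inner_self_eq_norm_sq]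

theorem hasSum_norm_sq_defect_adjoint_pow (hD : IsSelfAdjoint D) (hD2 : D * D = 1 - T * adjoint T)
    {f : E} (hf : Tendsto (fun n => (adjoint T ^ n) f) atTop (𝓝 0)) :
    HasSum (fun n => ‖D ((adjoint T ^ n) f)‖ ^ 2) (‖f‖ ^ 2) := by
  set a : ℕ → ℝ := fun n => ‖(adjoint T ^ n) f‖ ^ 2
  have hstep n : ‖D ((adjoint T ^ n) f)‖ ^ 2 = a n - a (n + 1) := by
    dsimp only [a]
    rw [norm_sq_defect_apply hD hD2, pow_succ' (adjoint T) n, mul_apply_eq_comp]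
  have ha0 : Tendsto a atTop (𝓝 0) := by
    simpa only [norm_zero, ne_eq, OfNat.ofNat_ne_zero, not_false_eq_true, zero_pow] using
      hf.norm.pow 2
  simpa only [← hstep, sub_zero, a, pow_zero, one_apply_eq_self] using
    hasSum_sub_succ_of_tendsto (fun n => sub_nonneg.1 (hstep n ▸ sq_nonneg _)) ha0

end Defect

theorem frame_of_iterations_from_defect_frame_general
    (H : Type*) [NormedAddCommGroup H] [InnerProductSpace ℂ H] [CompleteSpace H]
    (T : H →L[ℂ] H)
    (hstable : ∀ v : H,
      Filter.Tendsto (fun n : ℕ => ((ContinuousLinearMap.adjoint T) ^ n) v)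
        Filter.atTop (nhds 0))
    (D : H →L[ℂ] H) (hDpos : D.IsPositive)
    (hD2 : D * D = 1 - T * ContinuousLinearMap.adjoint T)
    {ι : Type*} (g : ι → H)
    (A B : ℝ) (hA : 0 < A)
    (hframe : ∀ f ∈ (LinearMap.range (D : H →ₗ[ℂ] H)).topologicalClosure,
      A * ‖f‖ ^ 2 ≤ ∑' i : ι, ‖⟪f, g i⟫‖ ^ 2 ∧
      ∑' i : ι, ‖⟪f, g i⟫‖ ^ 2 ≤ B * ‖f‖ ^ 2) :
    ∀ f : H,
      A * ‖f‖ ^ 2 ≤ ∑' p : ι × ℕ, ‖⟪f, (T ^ p.2) (D (g p.1))⟫‖ ^ 2 ∧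
      ∑' p : ι × ℕ, ‖⟪f, (T ^ p.2) (D (g p.1))⟫‖ ^ 2 ≤ B * ‖f‖ ^ 2 := by
  intro f
  have hD : IsSelfAdjoint D := hDpos.isSelfAdjoint
  simp only [inner_pow_apply_eq_inner_adjoint_pow_s6 hD]
  exact frame_bounds_tsum_prod hA hframe
    (fun n => Submodule.le_topologicalClosure _ (LinearMap.mem_range_self _ _))
    (hasSum_norm_sq_defect_adjoint_pow hD hD2 (hstable f))

/-- Let `T` be a contraction with strongly stable adjoint,
`D = (I − T T*)^{1/2}` the defect operator and `K` the closure of the range of `D`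
(the defect space). If `(gᵢ)` is a frame of `K` with bounds `A, B`, then
`{Tⁿ (D gᵢ)}` is a frame of `H` with the same bounds. -/
theorem frame_of_iterations_from_defect_frame
    (H : Type*) [NormedAddCommGroup H] [InnerProductSpace ℂ H] [CompleteSpace H]
    (T : H →L[ℂ] H) (hT : ‖T‖ ≤ 1)
    (hstable : ∀ v : H,
      Filter.Tendsto (fun n : ℕ => ((ContinuousLinearMap.adjoint T) ^ n) v)
        Filter.atTop (nhds 0))
    (D : H →L[ℂ] H) (hDpos : D.IsPositive)
    (hD2 : D * D = 1 - T * ContinuousLinearMap.adjoint T)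
    {ι : Type*} (g : ι → H)
    (hg : ∀ i, g i ∈ (LinearMap.range (D : H →ₗ[ℂ] H)).topologicalClosure)
    (A B : ℝ) (hA : 0 < A) (hB : 0 < B)
    (hframe : ∀ f ∈ (LinearMap.range (D : H →ₗ[ℂ] H)).topologicalClosure,
      A * ‖f‖ ^ 2 ≤ ∑' i : ι, ‖⟪f, g i⟫‖ ^ 2 ∧
      ∑' i : ι, ‖⟪f, g i⟫‖ ^ 2 ≤ B * ‖f‖ ^ 2) :
    ∀ f : H,
      A * ‖f‖ ^ 2 ≤ ∑' p : ι × ℕ, ‖⟪f, (T ^ p.2) (D (g p.1))⟫‖ ^ 2 ∧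
      ∑' p : ι × ℕ, ‖⟪f, (T ^ p.2) (D (g p.1))⟫‖ ^ 2 ≤ B * ‖f‖ ^ 2 :=
  frame_of_iterations_from_defect_frame_general H T hstable D hDpos hD2 g A B hA hframe
end

section
/- Let H be a complex Hilbert space and L a bounded isometry on H (‖Lx‖ = ‖x‖ for all x) which is pure, i.e., ⋂_{n≥0} range(Lⁿ) = {0}. Let W = (range L)ᗮ be the associated wandering subspace. If (g_i)_{i∈I} is a family of vectors of W with A‖f‖² ≤ ∑_{i∈I} |⟨f, g_i⟩|² ≤ B‖f‖² for all f ∈ W (for constants A, B > 0), then {Lⁿ g_i : i ∈ I, n ≥ 0} is a frame of H with the same bounds A, B. -/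
/-!
Write `W = (range L)ᗮ` and `P = 1 - L L*`, the orthogonal projection onto `W`. Since `L* L = 1`,
`‖L*ⁿ f‖² = ‖P L*ⁿ f‖² + ‖L*ⁿ⁺¹ f‖²`, and `L*ⁿ f → 0` because `L` is pure: the complements
`(range Lⁿ)ᗮ` increase to a dense subspace, and `L*ⁿ` vanishes on them. Telescoping gives
`‖f‖² = ∑ₙ ‖P L*ⁿ f‖²`, while `⟪f, Lⁿ gᵢ⟫ = ⟪P L*ⁿ f, gᵢ⟫`; applying the frame inequalities of `W`
to each `P L*ⁿ f` and summing over `n` gives the bounds.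
-/

open scoped InnerProductSpace
open ContinuousLinearMap Filter Topology

section

variable {𝕜 E : Type*} [RCLike 𝕜] [NormedAddCommGroup E] [InnerProductSpace 𝕜 E]

section Frame

variable {ι : Type*} {K : Submodule 𝕜 E} {g : ι → E} {A B : ℝ}

theorem summable_norm_inner_sq_of_frame (hA : 0 < A)
    (hlower : ∀ f ∈ K, A * ‖f‖ ^ 2 ≤ ∑' i, ‖⟪f, g i⟫_𝕜‖ ^ 2) {f : E} (hf : f ∈ K) :
    Summable fun i => ‖⟪f, g i⟫_𝕜‖ ^ 2 := by
  by_contra hns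
  have hf0 : f = 0 := by
    have := hlower f hf
    rw [tsum_eq_zero_of_not_summable hns] at this
    have : ‖f‖ ^ 2 ≤ 0 := nonpos_of_mul_nonpos_right this hA
    simpa using this
  simp [hf0, summable_zero] at hns

/-- A frame of `K` gives a frame, with the same bounds, of the square-summable sequences in `K`. -/
theorem frame_bounds_of_hasSum_norm_sq (hA : 0 < A)
    (hframe : ∀ f ∈ K, A * ‖f‖ ^ 2 ≤ ∑' i, ‖⟪f, g i⟫_𝕜‖ ^ 2 ∧
      ∑' i, ‖⟪f, g i⟫_𝕜‖ ^ 2 ≤ B * ‖f‖ ^ 2)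
    {w : ℕ → E} (hw : ∀ n, w n ∈ K) {s : ℝ} (hs : HasSum (fun n => ‖w n‖ ^ 2) s) :
    A * s ≤ ∑' p : ι × ℕ, ‖⟪w p.2, g p.1⟫_𝕜‖ ^ 2 ∧
      ∑' p : ι × ℕ, ‖⟪w p.2, g p.1⟫_𝕜‖ ^ 2 ≤ B * s := by
  set S : ℕ → ℝ := fun n => ∑' i, ‖⟪w n, g i⟫_𝕜‖ ^ 2
  have hrow n : Summable fun i => ‖⟪w n, g i⟫_𝕜‖ ^ 2 :=
    summable_norm_inner_sq_of_frame hA (fun f hf => (hframe f hf).1) (hw n)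
  have hS : Summable S :=
    .of_nonneg_of_le (fun n => tsum_nonneg fun i => by positivity)
      (fun n => (hframe _ (hw n)).2) (hs.summable.mul_left B)
  have hprod : Summable fun q : ℕ × ι => ‖⟪w q.1, g q.2⟫_𝕜‖ ^ 2 :=
    (summable_prod_of_nonneg fun q => by positivity).2 ⟨hrow, hS⟩
  have htsum : ∑' p : ι × ℕ, ‖⟪w p.2, g p.1⟫_𝕜‖ ^ 2 = ∑' n, S n := by
    rw [← (Equiv.prodComm ℕ ι).tsum_eq fun p : ι × ℕ => ‖⟪w p.2, g p.1⟫_𝕜‖ ^ 2]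
    exact hprod.tsum_prod' hrow
  rw [htsum, ← (hs.mul_left A).tsum_eq, ← (hs.mul_left B).tsum_eq]
  exact ⟨(hs.mul_left A).summable.tsum_le_tsum (fun n => (hframe _ (hw n)).1) hS,
    hS.tsum_le_tsum (fun n => (hframe _ (hw n)).2) (hs.mul_left B).summable⟩

end Frame

theorem hasSum_sub_succ_of_antitone {a : ℕ → ℝ} (ha : Antitone a) {l : ℝ}
    (hl : Tendsto a atTop (𝓝 l)) : HasSum (fun n => a n - a (n + 1)) (a 0 - l) := by
  rw [hasSum_iff_tendsto_nat_of_nonneg (fun n => sub_nonneg.2 (ha n.le_succ))]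
  simpa only [Finset.sum_range_sub'] using tendsto_const_nhds.sub hl

variable {L : E →L[𝕜] E}

theorem norm_pow_apply_of_isometry (hL : ∀ x, ‖L x‖ = ‖x‖) (n : ℕ) (x : E) :
    ‖(L ^ n) x‖ = ‖x‖ := by
  induction n with
  | zero => rfl
  | succ n ih => rw [pow_succ', mul_apply_eq_comp, hL, ih]

variable [CompleteSpace E]

theorem norm_adjoint_apply_le_of_isometry (hL : ∀ x, ‖L x‖ = ‖x‖) (y : E) :
    ‖adjoint L y‖ ≤ ‖y‖ := by
  have hnorm : ‖adjoint L‖ ≤ 1 := by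
    rw [LinearIsometryEquiv.norm_map]
    exact opNorm_le_bound _ zero_le_one fun x => by rw [hL, one_mul]
  simpa using (adjoint L).le_of_opNorm_le hnorm y

theorem adjoint_pow_succ_apply (L : E →L[𝕜] E) (n : ℕ) (x : E) :
    adjoint (L ^ (n + 1)) x = adjoint L (adjoint (L ^ n) x) := by
  rw [pow_succ, ← star_eq_adjoint, star_mul]
  rfl

theorem tendsto_adjoint_pow_apply_zero_of_pure (hL : ∀ x, ‖L x‖ = ‖x‖)
    (hpure : ⋂ n : ℕ, Set.range (L ^ n) = {0}) (f : E) :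
    Tendsto (fun n => adjoint (L ^ n) f) atTop (𝓝 0) := by
  set U : ℕ → Submodule 𝕜 E := fun n => (L ^ n).rangeᗮ
  have hU : Monotone U := fun m n hmn => Submodule.orthogonal_le <| by
    rintro _ ⟨y, rfl⟩
    refine ⟨(L ^ (n - m)) y, ?_⟩
    show (L ^ m * L ^ (n - m)) y = (L ^ n) y
    rw [← pow_add, Nat.add_sub_cancel' hmn]
  have hclosed n : (L ^ n).range.topologicalClosure = (L ^ n).range :=
    IsClosed.submodule_topologicalClosure_eq <|
      (AddMonoidHomClass.isometry_of_norm _ (norm_pow_apply_of_isometry hL n)).isClosedEmbedding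
        |>.isClosed_range
  have hdense : ⊤ ≤ (⨆ n, U n).topologicalClosure := by
    rw [top_le_iff, Submodule.topologicalClosure_eq_top_iff, ← Submodule.iInf_orthogonal,
      eq_bot_iff]
    intro x hx
    simp only [U, Submodule.orthogonal_orthogonal_eq_closure, hclosed] at hx
    have : x ∈ ⋂ n : ℕ, Set.range (L ^ n) :=
      Set.mem_iInter.2 fun n => (Submodule.mem_iInf _).1 hx n
    rwa [hpure] at this
  have hbound n : ‖adjoint (L ^ n) f‖ ≤ ‖f - (U n).starProjection f‖ := by
    have hker : (U n).starProjection f ∈ (adjoint (L ^ n)).ker := by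
      rw [← orthogonal_range]
      exact (U n).starProjection_apply_mem f
    calc ‖adjoint (L ^ n) f‖ = ‖adjoint (L ^ n) (f - (U n).starProjection f)‖ := by
          rw [map_sub, show adjoint (L ^ n) _ = 0 from hker, sub_zero]
      _ ≤ _ := norm_adjoint_apply_le_of_isometry (norm_pow_apply_of_isometry hL n) _
  have hproj :=
    (tendsto_const_nhds (x := f)).sub (Submodule.starProjection_tendsto_self U hU f hdense)
  rw [sub_self] at hproj
  exact squeeze_zero_norm hbound (by simpa using hproj.norm)

variable (L) in
/-- For an isometry `L`, the orthogonal projection onto the wandering subspace `(range L)ᗮ`. -/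
noncomputable def wanderingPart (x : E) : E := x - L (adjoint L x)

theorem wanderingPart_mem_orthogonal_range (hL : ∀ x, ‖L x‖ = ‖x‖) (x : E) :
    wanderingPart L x ∈ (LinearMap.range (L : E →ₗ[𝕜] E))ᗮ := by
  have hLL : adjoint L ∘L L = 1 := (norm_map_iff_adjoint_comp_self L).1 hL
  rw [orthogonal_range, LinearMap.mem_ker, coe_coe, wanderingPart, map_sub,
    ← comp_apply, hLL, one_apply_eq_self, sub_self]

theorem inner_wanderingPart_of_mem_orthogonal_range (x : E) {y : E}
    (hy : y ∈ (LinearMap.range (L : E →ₗ[𝕜] E))ᗮ) : ⟪wanderingPart L x, y⟫_𝕜 = ⟪x, y⟫_𝕜 := by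
  have hmem : L (adjoint L x) ∈ LinearMap.range (L : E →ₗ[𝕜] E) := ⟨_, rfl⟩
  rw [wanderingPart, inner_sub_left, Submodule.inner_right_of_mem_orthogonal hmem hy, sub_zero]

theorem norm_sq_wanderingPart_add_norm_sq_adjoint (hL : ∀ x, ‖L x‖ = ‖x‖) (x : E) :
    ‖wanderingPart L x‖ ^ 2 + ‖adjoint L x‖ ^ 2 = ‖x‖ ^ 2 := by
  have hmem : L (adjoint L x) ∈ LinearMap.range (L : E →ₗ[𝕜] E) := ⟨_, rfl⟩
  have horth : ⟪wanderingPart L x, L (adjoint L x)⟫_𝕜 = 0 :=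
    Submodule.inner_left_of_mem_orthogonal hmem (wanderingPart_mem_orthogonal_range hL x)
  have := norm_add_sq_eq_norm_sq_add_norm_sq_of_inner_eq_zero _ _ horth
  rw [wanderingPart, sub_add_cancel, hL] at this
  simp only [sq, wanderingPart, this]

/-- Wold decomposition at the level of norms. -/
theorem hasSum_norm_sq_wanderingPart_adjoint_pow (hL : ∀ x, ‖L x‖ = ‖x‖)
    (hpure : ⋂ n : ℕ, Set.range (L ^ n) = {0}) (f : E) :
    HasSum (fun n => ‖wanderingPart L (adjoint (L ^ n) f)‖ ^ 2) (‖f‖ ^ 2) := by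
  set a : ℕ → ℝ := fun n => ‖adjoint (L ^ n) f‖ ^ 2
  have hstep n : ‖wanderingPart L (adjoint (L ^ n) f)‖ ^ 2 = a n - a (n + 1) := by
    rw [eq_sub_iff_add_eq]
    show _ + ‖adjoint (L ^ (n + 1)) f‖ ^ 2 = ‖adjoint (L ^ n) f‖ ^ 2
    rw [adjoint_pow_succ_apply, norm_sq_wanderingPart_add_norm_sq_adjoint hL]
  have ha : Antitone a := antitone_nat_of_succ_le fun n => by
    rw [← sub_nonneg, ← hstep]; positivity
  have hlim : Tendsto a atTop (𝓝 0) := by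
    simpa [a] using ((tendsto_adjoint_pow_apply_zero_of_pure hL hpure f).norm).pow 2
  have ha0 : a 0 = ‖f‖ ^ 2 := by simp [a, ← star_eq_adjoint]
  simpa only [hstep, ha0, sub_zero] using hasSum_sub_succ_of_antitone ha hlim

end

open scoped ComplexInnerProductSpace

theorem frame_of_iterations_pure_isometry_general
    (H : Type*) [NormedAddCommGroup H] [InnerProductSpace ℂ H] [CompleteSpace H]
    (L : H →L[ℂ] H) (hiso : ∀ x : H, ‖L x‖ = ‖x‖)
    (hpure : (⋂ n : ℕ, Set.range (L ^ n)) = ({0} : Set H))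
    {ι : Type*} (g : ι → H)
    (hg : ∀ i, g i ∈ (LinearMap.range (L : H →ₗ[ℂ] H))ᗮ)
    (A B : ℝ) (hA : 0 < A)
    (hframe : ∀ f ∈ (LinearMap.range (L : H →ₗ[ℂ] H))ᗮ,
      A * ‖f‖ ^ 2 ≤ ∑' i : ι, ‖⟪f, g i⟫‖ ^ 2 ∧
      ∑' i : ι, ‖⟪f, g i⟫‖ ^ 2 ≤ B * ‖f‖ ^ 2) :
    ∀ f : H,
      A * ‖f‖ ^ 2 ≤ ∑' p : ι × ℕ, ‖⟪f, (L ^ p.2) (g p.1)⟫‖ ^ 2 ∧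
      ∑' p : ι × ℕ, ‖⟪f, (L ^ p.2) (g p.1)⟫‖ ^ 2 ≤ B * ‖f‖ ^ 2 := by
  intro f
  have hinner (p : ι × ℕ) :
      ⟪f, (L ^ p.2) (g p.1)⟫ = ⟪wanderingPart L (adjoint (L ^ p.2) f), g p.1⟫ := by
    rw [← adjoint_inner_left, inner_wanderingPart_of_mem_orthogonal_range _ (hg p.1)]
  simp only [hinner]
  exact frame_bounds_of_hasSum_norm_sq (w := fun n => wanderingPart L (adjoint (L ^ n) f)) hA
    hframe (fun n => wanderingPart_mem_orthogonal_range hiso _)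
    (hasSum_norm_sq_wanderingPart_adjoint_pow hiso hpure f)

/-- Let `L` be a pure isometry on `H` and `W = (range L)ᗮ` its
wandering subspace. Any frame `(gᵢ)` of `W` with bounds `A, B` gives rise to a frame
`{Lⁿ gᵢ}` of `H` with the same bounds. -/
theorem frame_of_iterations_pure_isometry
    (H : Type*) [NormedAddCommGroup H] [InnerProductSpace ℂ H] [CompleteSpace H]
    (L : H →L[ℂ] H) (hiso : ∀ x : H, ‖L x‖ = ‖x‖)
    (hpure : (⋂ n : ℕ, Set.range (L ^ n)) = ({0} : Set H))
    {ι : Type*} (g : ι → H)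
    (hg : ∀ i, g i ∈ (LinearMap.range (L : H →ₗ[ℂ] H))ᗮ)
    (A B : ℝ) (hA : 0 < A) (hB : 0 < B)
    (hframe : ∀ f ∈ (LinearMap.range (L : H →ₗ[ℂ] H))ᗮ,
      A * ‖f‖ ^ 2 ≤ ∑' i : ι, ‖⟪f, g i⟫‖ ^ 2 ∧
      ∑' i : ι, ‖⟪f, g i⟫‖ ^ 2 ≤ B * ‖f‖ ^ 2) :
    ∀ f : H,
      A * ‖f‖ ^ 2 ≤ ∑' p : ι × ℕ, ‖⟪f, (L ^ p.2) (g p.1)⟫‖ ^ 2 ∧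
      ∑' p : ι × ℕ, ‖⟪f, (L ^ p.2) (g p.1)⟫‖ ^ 2 ≤ B * ‖f‖ ^ 2 :=
  frame_of_iterations_pure_isometry_general H L hiso hpure g hg A B hA hframe
end

section
/- Let H be a complex separable infinite-dimensional Hilbert space and T a bounded operator on H. Assume that there exists a sequence (v_i)_{i∈ℕ} in H such that {Tⁿ v_i : i ∈ ℕ, n ≥ 0} is a Parseval frame of H, and that there exist m ∈ ℕ, a finite family (w_j)_{j∈Fin m} in H and constants A, B > 0 such that {Tⁿ w_j : j ∈ Fin m, n ≥ 0} is a frame of H with bounds A, B. Then ‖T‖ = 1. -/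
open scoped ComplexInnerProductSpace

/-!
Since `⟪T† x, Tⁿ v⟫ = ⟪x, Tⁿ⁺¹ v⟫`, the Parseval identity at `T† x` is the Parseval sum at `x` with
the terms `n = 0` dropped, so `‖T† x‖ ≤ ‖x‖` and `‖T‖ = ‖T†‖ ≤ 1`. If `‖T‖ < 1`, then `‖T^N‖ → 0`.
In infinite dimension some `y ≠ 0` is orthogonal to the finitely many vectors `Tⁿ w_j`, `n < N`;
for it the frame sum is the Bessel sum at `(T^N)† y`, at most `B ‖T^N‖² ‖y‖²`, which contradicts
the lower frame bound `A ‖y‖²` once `B ‖T^N‖² < A`.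
-/

namespace IterationFrame

open ContinuousLinearMap

variable {H : Type*} [NormedAddCommGroup H] [InnerProductSpace ℂ H] {ι : Type*}

lemma shift_injective (k : ℕ) : Function.Injective (Prod.map id (· + k) : ι × ℕ → ι × ℕ) :=
  Function.injective_id.prodMap (add_left_injective k)

lemma tsum_comp_shift_le {f : ι × ℕ → ℝ} (hf : 0 ≤ f) (hs : Summable f) (k : ℕ) :
    ∑' p : ι × ℕ, f (p.1, p.2 + k) ≤ ∑' p, f p :=
  (hs.comp_injective (shift_injective k)).tsum_le_tsum_of_inj _ (shift_injective k)
    (fun p _ => hf p) (fun _ => le_rfl) hs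

lemma tsum_comp_shift_eq {f : ι × ℕ → ℝ} {k : ℕ} (hf : ∀ p : ι × ℕ, p.2 < k → f p = 0) :
    ∑' p : ι × ℕ, f (p.1, p.2 + k) = ∑' p, f p := by
  refine (shift_injective k).tsum_eq fun p hp => ⟨(p.1, p.2 - k), ?_⟩
  have hkp : k ≤ p.2 := not_lt.mp fun h => hp (hf p h)
  simp [Nat.sub_add_cancel hkp]

lemma exists_ne_zero_forall_inner_eq_zero (hinf : ¬ FiniteDimensional ℂ H) {s : Set H}
    (hs : s.Finite) : ∃ y : H, y ≠ 0 ∧ ∀ u ∈ s, ⟪y, u⟫ = 0 := by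
  set K := Submodule.span ℂ s
  have : FiniteDimensional ℂ K := FiniteDimensional.span_of_finite ℂ hs
  have hK : K ≠ ⊤ := fun h => hinf (Module.finite_def.mpr (h ▸ Submodule.fg_span hs))
  obtain ⟨y, hy, hy0⟩ := (Submodule.ne_bot_iff _).mp (Submodule.orthogonal_eq_bot_iff.not.mpr hK)
  exact ⟨y, hy0, fun u hu => Submodule.inner_left_of_mem_orthogonal (Submodule.subset_span hu) hy⟩

variable [CompleteSpace H]

lemma tsum_norm_inner_adjoint_pow_sq (T : H →L[ℂ] H) (u : ι → H) (k : ℕ) (x : H) :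
    ∑' p : ι × ℕ, ‖⟪adjoint (T ^ k) x, (T ^ p.2) (u p.1)⟫‖ ^ 2 =
      ∑' p : ι × ℕ, ‖⟪x, (T ^ (p.2 + k)) (u p.1)⟫‖ ^ 2 := by
  refine tsum_congr fun p => ?_
  rw [adjoint_inner_left, ← mul_apply_eq_comp, ← pow_add, add_comm]

lemma norm_le_one_of_parseval (T : H →L[ℂ] H) (v : ι → H)
    (hv : ∀ x : H, ∑' p : ι × ℕ, ‖⟪x, (T ^ p.2) (v p.1)⟫‖ ^ 2 = ‖x‖ ^ 2) : ‖T‖ ≤ 1 := by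
  rw [← LinearIsometryEquiv.norm_map adjoint T]
  refine opNorm_le_bound _ zero_le_one fun x => ?_
  rcases eq_or_ne x 0 with rfl | hx
  · simp
  have hs : Summable fun p : ι × ℕ => ‖⟪x, (T ^ p.2) (v p.1)⟫‖ ^ 2 := by
    by_contra hs
    have := hv x
    rw [tsum_eq_zero_of_not_summable hs] at this
    exact hx (by simpa using this.symm)
  have hsq : ‖adjoint T x‖ ^ 2 ≤ ‖x‖ ^ 2 :=
    calc ‖adjoint T x‖ ^ 2
        = ∑' p : ι × ℕ, ‖⟪adjoint (T ^ 1) x, (T ^ p.2) (v p.1)⟫‖ ^ 2 := by rw [pow_one, hv]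
      _ = ∑' p : ι × ℕ, ‖⟪x, (T ^ (p.2 + 1)) (v p.1)⟫‖ ^ 2 :=
        tsum_norm_inner_adjoint_pow_sq T v 1 x
      _ ≤ ∑' p : ι × ℕ, ‖⟪x, (T ^ p.2) (v p.1)⟫‖ ^ 2 :=
        tsum_comp_shift_le (fun _ => by positivity) hs 1
      _ = ‖x‖ ^ 2 := hv x
  rw [one_mul]
  exact (pow_le_pow_iff_left₀ (norm_nonneg _) (norm_nonneg _) two_ne_zero).mp hsq

lemma tsum_norm_inner_pow_sq_le_of_forall_inner_eq_zero {T : H →L[ℂ] H} {u : ι → H} {B : ℝ}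
    (hB : 0 ≤ B) (hu : ∀ x : H, ∑' p : ι × ℕ, ‖⟪x, (T ^ p.2) (u p.1)⟫‖ ^ 2 ≤ B * ‖x‖ ^ 2)
    {N : ℕ} {y : H} (hy : ∀ i, ∀ n < N, ⟪y, (T ^ n) (u i)⟫ = 0) :
    ∑' p : ι × ℕ, ‖⟪y, (T ^ p.2) (u p.1)⟫‖ ^ 2 ≤ B * ‖T ^ N‖ ^ 2 * ‖y‖ ^ 2 :=
  calc ∑' p : ι × ℕ, ‖⟪y, (T ^ p.2) (u p.1)⟫‖ ^ 2
      = ∑' p : ι × ℕ, ‖⟪y, (T ^ (p.2 + N)) (u p.1)⟫‖ ^ 2 :=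
        (tsum_comp_shift_eq fun p hp => by rw [hy p.1 p.2 hp, norm_zero, zero_pow two_ne_zero]).symm
    _ = ∑' p : ι × ℕ, ‖⟪adjoint (T ^ N) y, (T ^ p.2) (u p.1)⟫‖ ^ 2 :=
        (tsum_norm_inner_adjoint_pow_sq T u N y).symm
    _ ≤ B * ‖adjoint (T ^ N) y‖ ^ 2 := hu _
    _ ≤ B * (‖T ^ N‖ * ‖y‖) ^ 2 := by
        gcongr
        simpa only [LinearIsometryEquiv.norm_map] using (adjoint (T ^ N)).le_opNorm y
    _ = B * ‖T ^ N‖ ^ 2 * ‖y‖ ^ 2 := by ring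

end IterationFrame

open IterationFrame Filter in
theorem norm_eq_one_of_parseval_and_finite_frame_general
    (H : Type*) [NormedAddCommGroup H] [InnerProductSpace ℂ H]
    [CompleteSpace H]
    (hinf : ¬ FiniteDimensional ℂ H)
    (T : H →L[ℂ] H) (v : ℕ → H)
    (hParseval : ∀ x : H, ∑' p : ℕ × ℕ, ‖⟪x, (T ^ p.2) (v p.1)⟫‖ ^ 2 = ‖x‖ ^ 2)
    (m : ℕ) (w : Fin m → H) (A B : ℝ) (hA : 0 < A) (hB : 0 < B)
    (hframe : ∀ x : H,
      A * ‖x‖ ^ 2 ≤ ∑' p : Fin m × ℕ, ‖⟪x, (T ^ p.2) (w p.1)⟫‖ ^ 2 ∧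
      ∑' p : Fin m × ℕ, ‖⟪x, (T ^ p.2) (w p.1)⟫‖ ^ 2 ≤ B * ‖x‖ ^ 2) :
    ‖T‖ = 1 := by
  refine le_antisymm (norm_le_one_of_parseval T v hParseval) (not_lt.mp fun hT => ?_)
  obtain ⟨N, hN⟩ : ∃ N : ℕ, B * ‖T ^ N‖ ^ 2 < A := by
    have : Tendsto (fun N : ℕ => B * ‖T ^ N‖ ^ 2) atTop (nhds 0) := by
      simpa using ((tendsto_pow_atTop_nhds_zero_of_norm_lt_one hT).norm.pow 2).const_mul B
    exact (this.eventually (gt_mem_nhds hA)).exists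
  obtain ⟨y, hy0, hy⟩ := exists_ne_zero_forall_inner_eq_zero hinf
    (Set.finite_range fun p : Fin m × Fin N => (T ^ (p.2 : ℕ)) (w p.1))
  have hupper := tsum_norm_inner_pow_sq_le_of_forall_inner_eq_zero hB.le (fun x => (hframe x).2)
    fun j n hn => hy _ ⟨(j, ⟨n, hn⟩), rfl⟩
  exact ((hframe y).1.trans hupper).not_gt (mul_lt_mul_of_pos_right hN (by positivity))

/-- If `T` on an infinite-dimensional separable Hilbert space
admits a Parseval frame of iterations and also a frame of iterations with finitely
many generators, then `‖T‖ = 1`. -/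
theorem norm_eq_one_of_parseval_and_finite_frame
    (H : Type*) [NormedAddCommGroup H] [InnerProductSpace ℂ H]
    [CompleteSpace H] [TopologicalSpace.SeparableSpace H]
    (hinf : ¬ FiniteDimensional ℂ H)
    (T : H →L[ℂ] H) (v : ℕ → H)
    (hParseval : ∀ x : H, ∑' p : ℕ × ℕ, ‖⟪x, (T ^ p.2) (v p.1)⟫‖ ^ 2 = ‖x‖ ^ 2)
    (m : ℕ) (w : Fin m → H) (A B : ℝ) (hA : 0 < A) (hB : 0 < B)
    (hframe : ∀ x : H,
      A * ‖x‖ ^ 2 ≤ ∑' p : Fin m × ℕ, ‖⟪x, (T ^ p.2) (w p.1)⟫‖ ^ 2 ∧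
      ∑' p : Fin m × ℕ, ‖⟪x, (T ^ p.2) (w p.1)⟫‖ ^ 2 ≤ B * ‖x‖ ^ 2) :
    ‖T‖ = 1 :=
  norm_eq_one_of_parseval_and_finite_frame_general H hinf T v hParseval m w A B hA hB hframe
end

section
/- Let H be a complex separable Hilbert space and T a bounded operator on H with ‖T‖ ≤ 1 such that (T*)ⁿ v → 0 as n → ∞ for every v ∈ H. Let K be the closure of the range of I − T T* and let (e_i)_{i∈ι} be a Hilbert (orthonormal) basis of K. Then there exists a linearly independent family (v_i)_{i∈ι} in H such that {Tⁿ v_i : i ∈ ι, n ≥ 0} is a Parseval frame of H. In particular, the Parseval frame index γ_p(T) equals the Hilbert dimension of K and is attained with linearly independent generators. -/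
open scoped ComplexInnerProductSpace

/-!
Let `D = (1 - T T*)^{1/2}` be the defect operator of `T*`. Then `‖D y‖² = ‖y‖² - ‖T* y‖²`, and `D`
maps `H` into the defect space `K = (ker D)ᗮ`, on which it is injective; so `vᵢ = D eᵢ` is linearly
independent. For fixed `n`, Parseval's identity in `K` gives
`∑ᵢ |⟪x, Tⁿ vᵢ⟫|² = ‖D T*ⁿ x‖² = ‖T*ⁿ x‖² - ‖T*ⁿ⁺¹ x‖²`, and the sum over `n` telescopes to `‖x‖²`
because `T*ⁿ x → 0`.
-/

open scoped InnerProduct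
open Filter Topology

theorem Antitone.hasSum_sub_succ {f : ℕ → ℝ} (hf : Antitone f) {l : ℝ}
    (hl : Tendsto f atTop (𝓝 l)) : HasSum (fun n => f n - f (n + 1)) (f 0 - l) := by
  rw [hasSum_iff_tendsto_nat_of_nonneg fun n => sub_nonneg.2 (hf n.le_succ)]
  simp_rw [Finset.sum_range_sub']
  exact tendsto_const_nhds.sub hl

theorem HasSum.prod_of_fiberwise_nonneg {α β : Type*} {F : α × β → ℝ} {g : β → ℝ} {s : ℝ}
    (hg : HasSum g s) (hF : 0 ≤ F) (hfib : ∀ b, HasSum (fun a => F (a, b)) (g b)) :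
    HasSum F s := by
  have hswap : Summable fun p : β × α => F p.swap :=
    (summable_prod_of_nonneg fun p => hF p.swap).2
      ⟨fun b => (hfib b).summable,
        by simpa only [Prod.swap_prod_mk, (hfib _).tsum_eq] using hg.summable⟩
  have hsummable : Summable F := (Equiv.prodComm β α).summable_iff.1 hswap
  obtain rfl := hg.unique (((Equiv.prodComm β α).hasSum_iff.2 hsummable.hasSum).prod_fiberwise hfib)
  exact hsummable.hasSum

theorem HilbertBasis.hasSum_norm_inner_sq {ι 𝕜 E : Type*} [RCLike 𝕜] [NormedAddCommGroup E]
    [InnerProductSpace 𝕜 E] (b : HilbertBasis ι 𝕜 E) (x : E) :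
    HasSum (fun i => ‖inner 𝕜 x (b i)‖ ^ 2) (‖x‖ ^ 2) := by
  have := lp.hasSum_norm (p := 2) (by norm_num) (b.repr x)
  simpa [b.repr_apply_apply, norm_inner_symm] using this

theorem LinearIndependent.map_of_mem_orthogonal_ker {ι 𝕜 E F : Type*} [RCLike 𝕜]
    [NormedAddCommGroup E] [InnerProductSpace 𝕜 E] [NormedAddCommGroup F] [NormedSpace 𝕜 F]
    {v : ι → E} (hv : LinearIndependent 𝕜 v) (f : E →L[𝕜] F)
    (h : ∀ i, v i ∈ f.kerᗮ) : LinearIndependent 𝕜 (f ∘ v) :=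
  hv.map ((Submodule.orthogonal_disjoint _).symm.mono_left
    (Submodule.span_le.2 (Set.range_subset_iff.2 h)))

section Defect

variable {A : Type*} [CStarAlgebra A] [PartialOrder A] [StarOrderedRing A]

/-- Junk unless `‖a‖ ≤ 1`: only then is `1 - a⋆a` nonnegative. -/
noncomputable def defect (a : A) : A := CFC.sqrt (1 - star a * a)

theorem one_sub_star_mul_self_nonneg {a : A} (ha : ‖a‖ ≤ 1) : 0 ≤ 1 - star a * a := by
  rw [sub_nonneg, ← CStarAlgebra.norm_le_one_iff_of_nonneg _ (star_mul_self_nonneg a),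
    CStarRing.norm_star_mul_self]
  exact mul_le_one₀ ha (norm_nonneg a) ha

theorem defect_mul_self {a : A} (ha : ‖a‖ ≤ 1) : defect a * defect a = 1 - star a * a :=
  CFC.sqrt_mul_sqrt_self _ (one_sub_star_mul_self_nonneg ha)

theorem isSelfAdjoint_defect (a : A) : IsSelfAdjoint (defect a) :=
  IsSelfAdjoint.of_nonneg (CFC.sqrt_nonneg _)

end Defect

section Hilbert

variable {H : Type*} [NormedAddCommGroup H] [InnerProductSpace ℂ H] [CompleteSpace H]

theorem adjoint_defect (T : H →L[ℂ] H) : (defect T)† = defect T :=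
  ContinuousLinearMap.isSelfAdjoint_iff'.mp (isSelfAdjoint_defect T)

theorem norm_defect_apply_sq {T : H →L[ℂ] H} (hT : ‖T‖ ≤ 1) (x : H) :
    ‖defect T x‖ ^ 2 = ‖x‖ ^ 2 - ‖T x‖ ^ 2 := by
  rw [ContinuousLinearMap.apply_norm_sq_eq_inner_adjoint_right,
    ContinuousLinearMap.apply_norm_sq_eq_inner_adjoint_right T, adjoint_defect]
  change RCLike.re ⟪x, (defect T * defect T) x⟫ = _
  rw [defect_mul_self hT, ContinuousLinearMap.star_eq_adjoint, sub_apply,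
    one_apply_eq_self, inner_sub_right, map_sub, inner_self_eq_norm_sq]
  rfl

theorem defect_apply_mem_orthogonal_ker (T : H →L[ℂ] H) (x : H) :
    defect T x ∈ (defect T).kerᗮ := by
  rw [← (isSelfAdjoint_defect T).isSymmetric.orthogonal_range]
  exact Submodule.le_orthogonal_orthogonal _ ⟨x, rfl⟩

theorem orthogonal_ker_defect {T : H →L[ℂ] H} (hT : ‖T‖ ≤ 1) :
    (defect T).kerᗮ = (1 - star T * T).range.topologicalClosure := by
  have hD : (defect T)† ∘L defect T = 1 - star T * T := by
    rw [adjoint_defect, ← defect_mul_self hT]; rfl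
  have := ContinuousLinearMap.orthogonal_ker ((defect T)† ∘L defect T)
  rwa [ContinuousLinearMap.ker_adjoint_comp_self, ContinuousLinearMap.adjoint_comp,
    ContinuousLinearMap.adjoint_adjoint, hD] at this

theorem hasSum_norm_defect_pow_apply_sq {S : H →L[ℂ] H} (hS : ‖S‖ ≤ 1) {x : H}
    (hx : Tendsto (fun n => (S ^ n) x) atTop (𝓝 0)) :
    HasSum (fun n => ‖defect S ((S ^ n) x)‖ ^ 2) (‖x‖ ^ 2) := by
  have hanti : Antitone fun n => ‖(S ^ n) x‖ ^ 2 := antitone_nat_of_succ_le fun n => by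
    rw [pow_succ' S n, mul_apply_eq_comp]
    gcongr
    exact (S.le_of_opNorm_le hS _).trans_eq (one_mul _)
  have hlim : Tendsto (fun n => ‖(S ^ n) x‖ ^ 2) atTop (𝓝 0) := by
    simpa using hx.norm.pow 2
  simpa [norm_defect_apply_sq hS, pow_succ'] using hanti.hasSum_sub_succ hlim

theorem inner_pow_defect_adjoint (T : H →L[ℂ] H) (n : ℕ) (x y : H) :
    ⟪x, (T ^ n) (defect (T†) y)⟫ = ⟪defect (T†) ((T† ^ n) x), y⟫ := by
  rw [← ContinuousLinearMap.adjoint_inner_left (T ^ n), ← ContinuousLinearMap.star_eq_adjoint,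
    star_pow, ContinuousLinearMap.star_eq_adjoint]
  exact ((isSelfAdjoint_defect (T†)).isSymmetric _ _).symm

end Hilbert

theorem parseval_index_attained_linearly_independent_general
    (H : Type*) [NormedAddCommGroup H] [InnerProductSpace ℂ H]
    [CompleteSpace H]
    (T : H →L[ℂ] H) (hT : ‖T‖ ≤ 1)
    (hstable : ∀ v : H,
      Filter.Tendsto (fun n : ℕ => ((ContinuousLinearMap.adjoint T) ^ n) v)
        Filter.atTop (nhds 0))
    (K : Submodule ℂ H)
    (hK : K = (LinearMap.range (((1 - T * ContinuousLinearMap.adjoint T : H →L[ℂ] H) : H →ₗ[ℂ] H))).topologicalClosure)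
    {ι : Type*} (e : HilbertBasis ι ℂ K) :
    ∃ v : ι → H, LinearIndependent ℂ v ∧
      ∀ x : H, ∑' p : ι × ℕ, ‖⟪x, (T ^ p.2) (v p.1)⟫‖ ^ 2 = ‖x‖ ^ 2 := by
  have hT' : ‖T†‖ ≤ 1 := (ContinuousLinearMap.adjoint.norm_map T).trans_le hT
  have hKD : K = (defect (T†)).kerᗮ := by
    rw [hK, orthogonal_ker_defect hT', ContinuousLinearMap.star_eq_adjoint,
      ContinuousLinearMap.adjoint_adjoint]
  refine ⟨fun i => defect (T†) (e i), ?_, fun x => ?_⟩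
  · exact (e.orthonormal.comp_linearIsometry K.subtypeₗᵢ).linearIndependent
      |>.map_of_mem_orthogonal_ker _ fun i => hKD ▸ (e i).2
  · refine (HasSum.prod_of_fiberwise_nonneg (hasSum_norm_defect_pow_apply_sq hT' (hstable x))
      (fun _ => sq_nonneg _) fun n => ?_).tsum_eq
    simp only [inner_pow_defect_adjoint]
    have hmem : defect (T†) ((T† ^ n) x) ∈ K := hKD ▸ defect_apply_mem_orthogonal_ker _ _
    simpa using e.hasSum_norm_inner_sq ⟨_, hmem⟩

/-- Let `T` be a contraction with strongly stable adjoint, `K` the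
closure of the range of `I − T T*` (the defect space) and `(eᵢ)_{i ∈ ι}` a Hilbert
basis of `K`. Then there is a linearly independent family `(vᵢ)_{i ∈ ι}` whose
iterates `{Tⁿ vᵢ}` form a Parseval frame of `H`; in particular the Parseval frame
index is attained, with linearly independent generators, by a family indexed by a
Hilbert basis of the defect space. -/
theorem parseval_index_attained_linearly_independent
    (H : Type*) [NormedAddCommGroup H] [InnerProductSpace ℂ H]
    [CompleteSpace H] [TopologicalSpace.SeparableSpace H]
    (T : H →L[ℂ] H) (hT : ‖T‖ ≤ 1)
    (hstable : ∀ v : H,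
      Filter.Tendsto (fun n : ℕ => ((ContinuousLinearMap.adjoint T) ^ n) v)
        Filter.atTop (nhds 0))
    (K : Submodule ℂ H)
    (hK : K = (LinearMap.range (((1 - T * ContinuousLinearMap.adjoint T : H →L[ℂ] H) : H →ₗ[ℂ] H))).topologicalClosure)
    [CompleteSpace K]
    {ι : Type*} (e : HilbertBasis ι ℂ K) :
    ∃ v : ι → H, LinearIndependent ℂ v ∧
      ∀ x : H, ∑' p : ι × ℕ, ‖⟪x, (T ^ p.2) (v p.1)⟫‖ ^ 2 = ‖x‖ ^ 2 :=
  parseval_index_attained_linearly_independent_general H T hT hstable K hK e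
end

section
/- Let H be a complex separable Hilbert space, T a bounded operator on H, m ∈ ℕ, and (v_i)_{i∈Fin m} a finite family such that {Tⁿ v_i : i ∈ Fin m, n ≥ 0} is a frame of H (with some bounds A, B > 0). Assume moreover that m is minimal, i.e., for every k < m there is no family (w_j)_{j∈Fin k} and constants A', B' > 0 such that {Tⁿ w_j : j ∈ Fin k, n ≥ 0} is a frame of H. Then the family (v_i)_{i∈Fin m} is linearly independent. -/
open scoped ComplexInnerProductSpace

/-- If `{Tⁿ vᵢ : i ∈ Fin m}` is a frame of iterations of `H` and
the number of generators `m` is minimal (no family of fewer generators yields a frame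
of iterations), then the generators `(vᵢ)` are linearly independent. -/
theorem minimal_generators_linearly_independent
    (H : Type*) [NormedAddCommGroup H] [InnerProductSpace ℂ H]
    [CompleteSpace H] [TopologicalSpace.SeparableSpace H]
    (T : H →L[ℂ] H) (m : ℕ) (v : Fin m → H) (A B : ℝ) (hA : 0 < A) (hB : 0 < B)
    (hframe : ∀ x : H,
      A * ‖x‖ ^ 2 ≤ ∑' p : Fin m × ℕ, ‖⟪x, (T ^ p.2) (v p.1)⟫‖ ^ 2 ∧
      ∑' p : Fin m × ℕ, ‖⟪x, (T ^ p.2) (v p.1)⟫‖ ^ 2 ≤ B * ‖x‖ ^ 2)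
    (hmin : ∀ k < m, ¬ ∃ (w : Fin k → H) (A' B' : ℝ), 0 < A' ∧ 0 < B' ∧
      ∀ x : H,
        A' * ‖x‖ ^ 2 ≤ ∑' p : Fin k × ℕ, ‖⟪x, (T ^ p.2) (w p.1)⟫‖ ^ 2 ∧
        ∑' p : Fin k × ℕ, ‖⟪x, (T ^ p.2) (w p.1)⟫‖ ^ 2 ≤ B' * ‖x‖ ^ 2) :
    LinearIndependent ℂ v := by
  rcases m with _ | k
  · exact linearIndependent_empty_type
  by_contra hdep
  rw [Fintype.not_linearIndependent_iff] at hdep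
  obtain ⟨g, hg, i, hgi⟩ := hdep
  set w : Fin k → H := fun j => v (i.succAbove j) with hw
  set c : Fin k → ℂ := fun j => -(g (i.succAbove j) / g i) with hc
  -- v i is a combination of the others
  have hvi : v i = ∑ j, c j • w j := by
    have h0 := Fin.sum_univ_succAbove (fun j => g j • v j) i
    rw [hg] at h0
    have h1 : g i • v i = -∑ j, g (i.succAbove j) • v (i.succAbove j) :=
      eq_neg_of_add_eq_zero_left h0.symm
    calc v i = (g i)⁻¹ • (g i • v i) := by
          rw [smul_smul, inv_mul_cancel₀ hgi, one_smul]
      _ = ∑ j, c j • w j := by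
          rw [h1, smul_neg, Finset.smul_sum, ← Finset.sum_neg_distrib]
          refine Finset.sum_congr rfl fun j _ => ?_
          simp [hc, hw, smul_smul, div_eq_mul_inv, mul_comm]
  set C : ℝ := ∑ j, ‖c j‖ ^ 2 with hC
  have hC0 : 0 ≤ C := Finset.sum_nonneg fun j _ => sq_nonneg _
  have hC1 : (0:ℝ) < C + 1 := by linarith
  -- families
  set f : H → Fin (k+1) × ℕ → ℝ := fun x p => ‖⟪x, (T ^ p.2) (v p.1)⟫‖ ^ 2 with hf
  set f' : H → Fin k × ℕ → ℝ := fun x p => ‖⟪x, (T ^ p.2) (w p.1)⟫‖ ^ 2 with hf'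
  have hfnn : ∀ x p, 0 ≤ f x p := fun x p => sq_nonneg _
  have hf'nn : ∀ x p, 0 ≤ f' x p := fun x p => sq_nonneg _
  -- summability of the full family
  have hsum : ∀ x, Summable (f x) := by
    intro x
    by_contra hns
    have h0 : ∑' p, f x p = 0 := tsum_eq_zero_of_not_summable hns
    have := (hframe x).1
    rw [show (∑' p : Fin (k+1) × ℕ, ‖⟪x, (T ^ p.2) (v p.1)⟫‖ ^ 2) = ∑' p, f x p from rfl,
      h0] at this
    have hx : x = 0 := by
      have : ‖x‖ ^ 2 ≤ 0 := by nlinarith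
      have : ‖x‖ = 0 := by nlinarith [sq_nonneg ‖x‖, norm_nonneg x]
      exact norm_eq_zero.mp this
    subst hx
    exact hns (by simpa [hf] using summable_zero)
  -- embedding
  have hembinj : Function.Injective (fun p : Fin k × ℕ => ((i.succAbove p.1, p.2) : Fin (k+1) × ℕ)) := by
    intro p q h
    simp only [Prod.mk.injEq] at h
    exact Prod.ext (Fin.succAbove_right_injective h.1) h.2
  have hcomp : ∀ x, f' x = f x ∘ (fun p : Fin k × ℕ => ((i.succAbove p.1, p.2) : Fin (k+1) × ℕ)) :=
    fun x => rfl
  have hsum' : ∀ x, Summable (f' x) := fun x => by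
    rw [hcomp]; exact (hsum x).comp_injective hembinj
  -- column summability
  have hcol : ∀ x (b : Fin (k+1)), Summable (fun n => f x (b, n)) := fun x b =>
    (hsum x).comp_injective (fun n₁ n₂ h => by simpa using congrArg Prod.snd h)
  have hcol' : ∀ x (b : Fin k), Summable (fun n => f' x (b, n)) := fun x b =>
    (hsum' x).comp_injective (fun n₁ n₂ h => by simpa using congrArg Prod.snd h)
  -- pointwise Cauchy-Schwarz
  have hCS : ∀ (x : H) (n : ℕ), f x (i, n) ≤ C * ∑ j, f' x (j, n) := by
    intro x n
    have hinner : ⟪x, (T ^ n) (v i)⟫ = ∑ j, c j * ⟪x, (T ^ n) (w j)⟫ := by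
      rw [hvi, map_sum]
      rw [inner_sum]
      simp [inner_smul_right]
    have h1 : ‖⟪x, (T ^ n) (v i)⟫‖ ≤ ∑ j, ‖c j‖ * ‖⟪x, (T ^ n) (w j)⟫‖ := by
      rw [hinner]
      refine (norm_sum_le _ _).trans_eq ?_
      exact Finset.sum_congr rfl fun j _ => norm_mul _ _
    have h2 : (∑ j, ‖c j‖ * ‖⟪x, (T ^ n) (w j)⟫‖) ^ 2
        ≤ C * ∑ j, ‖⟪x, (T ^ n) (w j)⟫‖ ^ 2 :=
      Finset.sum_mul_sq_le_sq_mul_sq _ _ _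
    calc f x (i, n) = ‖⟪x, (T ^ n) (v i)⟫‖ ^ 2 := rfl
      _ ≤ (∑ j, ‖c j‖ * ‖⟪x, (T ^ n) (w j)⟫‖) ^ 2 := by
          apply pow_le_pow_left₀ (norm_nonneg _) h1
      _ ≤ C * ∑ j, f' x (j, n) := h2
  -- splitting of total sums
  have hsplit : ∀ x, ∑' p, f x p = (∑' n, f x (i, n)) + ∑' p, f' x p := by
    intro x
    have e1 : ∑' p, f x p = ∑ b : Fin (k+1), ∑' n, f x (b, n) := by
      rw [Summable.tsum_prod' (hsum x) (hcol x)]; exact tsum_fintype _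
    have e2 : ∑' p, f' x p = ∑ b : Fin k, ∑' n, f' x (b, n) := by
      rw [Summable.tsum_prod' (hsum' x) (hcol' x)]; exact tsum_fintype _
    rw [e1, e2, Fin.sum_univ_succAbove (fun b => ∑' n, f x (b, n)) i]
  have hkey : ∀ x, ∑' p, f x p ≤ (C + 1) * ∑' p, f' x p := by
    intro x
    have h1 : ∑' n, f x (i, n) ≤ C * ∑' p, f' x p := by
      have hS : Summable (fun n => C * ∑ j, f' x (j, n)) :=
        (summable_sum fun j _ => hcol' x j).mul_left C
      calc ∑' n, f x (i, n) ≤ ∑' n, C * ∑ j, f' x (j, n) :=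
            Summable.tsum_le_tsum (fun n => hCS x n) (hcol x i) hS
        _ = C * ∑' n, ∑ j, f' x (j, n) := tsum_mul_left
        _ = C * ∑ j, ∑' n, f' x (j, n) := by
            rw [Summable.tsum_finsetSum (fun j _ => hcol' x j)]
        _ = C * ∑' p, f' x p := by
            rw [Summable.tsum_prod' (hsum' x) (hcol' x)]; rw [tsum_fintype (f := fun b : Fin k => ∑' n, f' x (b, n))]
    have h2 := hsplit x
    have h3 : (0:ℝ) ≤ ∑' p, f' x p := tsum_nonneg (hf'nn x)
    nlinarith
  -- contradiction with minimality
  refine hmin k (Nat.lt_succ_self k) ⟨w, A / (C + 1), B, div_pos hA hC1, hB, fun x => ?_⟩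
  have hL := (hframe x).1
  have hU := (hframe x).2
  have hfx : (∑' p : Fin (k+1) × ℕ, ‖⟪x, (T ^ p.2) (v p.1)⟫‖ ^ 2) = ∑' p, f x p := rfl
  have hf'x : (∑' p : Fin k × ℕ, ‖⟪x, (T ^ p.2) (w p.1)⟫‖ ^ 2) = ∑' p, f' x p := rfl
  rw [hfx] at hL hU
  rw [hf'x]
  constructor
  · rw [div_mul_eq_mul_div, div_le_iff₀ hC1]
    have := hkey x
    nlinarith
  · refine le_trans ?_ hU
    have : ∑' p, f' x p ≤ ∑' p, f x p := by
      rw [hcomp x]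
      exact tsum_comp_le_tsum_of_inj (hsum x) (hfnn x) hembinj
    exact this
end

section
/- Let H be a complex separable infinite-dimensional Hilbert space, T a bounded operator on H, m ∈ ℕ, and (v_i)_{i∈Fin m} a finite family such that {Tⁿ v_i : i ∈ Fin m, n ≥ 0} is a frame of H with some bounds A, B > 0. Then there exist a bounded operator Q on H with ‖Q‖ ≤ 1, a continuous linear equivalence V : H → H with Q = V T V⁻¹, and a family (w_i)_{i∈Fin m} in H such that {Qⁿ w_i : i ∈ Fin m, n ≥ 0} is a Parseval frame of H. -/
/-!
Let `S = Θ†Θ` be the frame operator of `eₚ = Tⁿ vᵢ`, where `Θ x = (⟪eₚ, x⟫)ₚ ∈ ℓ²` is the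
analysis operator. The frame bounds make `S` positive and invertible, and `V = S^(-1/2)` sends
`(eₚ)` to a Parseval frame `(V eₚ)`. Since `V Tⁿ vᵢ = Qⁿ (V vᵢ)` for `Q = V T V⁻¹`, this is a
Parseval frame of iterates of `Q`. A Parseval frame of iterates forces `‖Q‖ ≤ 1`: the coefficients
of `Q† x` are those of `x` against the subfamily `Qⁿ⁺¹ wᵢ`, so `‖Q† x‖ ≤ ‖x‖`.
-/

open scoped ComplexInnerProductSpace InnerProductSpace InnerProduct lp

section Frame

variable {𝕜 E ι : Type*} [RCLike 𝕜] [NormedAddCommGroup E] [InnerProductSpace 𝕜 E]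

/-- A positive lower bound forces summability, since a divergent `tsum` is `0`. -/
lemma summable_norm_inner_sq_of_lower_bound {e : ι → E} {A : ℝ} (hA : 0 < A)
    (hlow : ∀ x, A * ‖x‖ ^ 2 ≤ ∑' p, ‖⟪x, e p⟫_𝕜‖ ^ 2) (x : E) :
    Summable fun p => ‖⟪x, e p⟫_𝕜‖ ^ 2 := by
  rcases eq_or_ne x 0 with rfl | hx
  · simp
  by_contra h
  have := hlow x
  rw [tsum_eq_zero_of_not_summable h] at this
  exact this.not_gt (by positivity)

lemma lp.norm_sq_eq_tsum {G : ι → Type*} [∀ i, NormedAddCommGroup (G i)] (f : lp G 2) :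
    ‖f‖ ^ 2 = ∑' i, ‖f i‖ ^ 2 := by
  simpa using lp.norm_rpow_eq_tsum (p := 2) (by norm_num) f

noncomputable def analysisOperator (e : ι → E) (B : ℝ)
    (hsum : ∀ x, Summable fun p => ‖⟪x, e p⟫_𝕜‖ ^ 2)
    (hB : ∀ x, ∑' p, ‖⟪x, e p⟫_𝕜‖ ^ 2 ≤ B * ‖x‖ ^ 2) : E →L[𝕜] ℓ²(ι, 𝕜) :=
  LinearMap.mkContinuous
    { toFun x := ⟨fun p => ⟪e p, x⟫_𝕜, memℓp_gen (by simpa [norm_inner_symm] using hsum x)⟩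
      map_add' x y := lp.ext <| funext fun p => inner_add_right _ _ _
      map_smul' c x := lp.ext <| funext fun p => inner_smul_right _ _ _ }
    (Real.sqrt B) fun x => by
      rw [← Real.sqrt_sq (norm_nonneg _), ← Real.sqrt_sq (norm_nonneg x),
        ← Real.sqrt_mul' _ (by positivity)]
      refine Real.sqrt_le_sqrt ((lp.norm_sq_eq_tsum _).trans_le ?_)
      simpa [norm_inner_symm] using hB x

lemma norm_analysisOperator_sq {e : ι → E} {B : ℝ}
    (hsum : ∀ x, Summable fun p => ‖⟪x, e p⟫_𝕜‖ ^ 2)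
    (hB : ∀ x, ∑' p, ‖⟪x, e p⟫_𝕜‖ ^ 2 ≤ B * ‖x‖ ^ 2) (x : E) :
    ‖analysisOperator e B hsum hB x‖ ^ 2 = ∑' p, ‖⟪x, e p⟫_𝕜‖ ^ 2 := by
  rw [lp.norm_sq_eq_tsum]
  exact tsum_congr fun p => by rw [← norm_inner_symm]; rfl

theorem norm_le_one_of_parseval_iterates [CompleteSpace E] {Q : E →L[𝕜] E} {w : ι → E}
    (hQ : ∀ x, ∑' p : ι × ℕ, ‖⟪x, (Q ^ p.2) (w p.1)⟫_𝕜‖ ^ 2 = ‖x‖ ^ 2) : ‖Q‖ ≤ 1 := by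
  have hsum := summable_norm_inner_sq_of_lower_bound one_pos fun x =>
    (one_mul (‖x‖ ^ 2)).trans_le (hQ x).ge
  have hshift : Function.Injective fun p : ι × ℕ => (p.1, p.2 + 1) := by
    intro p q h
    simp_all [Prod.ext_iff]
  rw [← ContinuousLinearMap.adjoint.norm_map Q]
  refine (Q†).opNorm_le_bound zero_le_one fun x => ?_
  have : ‖(Q†) x‖ ^ 2 ≤ ‖x‖ ^ 2 := calc
    ‖(Q†) x‖ ^ 2 = ∑' p : ι × ℕ, ‖⟪x, (Q ^ (p.2 + 1)) (w p.1)⟫_𝕜‖ ^ 2 := by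
      simp_rw [← hQ ((Q†) x), ContinuousLinearMap.adjoint_inner_left, pow_succ',
        mul_apply_eq_comp]
    _ ≤ ∑' p : ι × ℕ, ‖⟪x, (Q ^ p.2) (w p.1)⟫_𝕜‖ ^ 2 :=
      tsum_comp_le_tsum_of_inj (hsum x) (fun _ => sq_nonneg _) hshift
    _ = ‖x‖ ^ 2 := hQ x
  simpa using (pow_le_pow_iff_left₀ (norm_nonneg _) (norm_nonneg _) two_ne_zero).mp this

end Frame

lemma ContinuousLinearEquiv.conjContinuousAlgEquiv_pow_apply {𝕜 E F : Type*} [NormedField 𝕜]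
    [NormedAddCommGroup E] [NormedSpace 𝕜 E] [NormedAddCommGroup F] [NormedSpace 𝕜 F]
    (V : E ≃L[𝕜] F) (T : E →L[𝕜] E) (n : ℕ) (x : E) :
    (V.conjContinuousAlgEquiv T ^ n) (V x) = V ((T ^ n) x) := by
  rw [← map_pow, conjContinuousAlgEquiv_apply_apply, V.symm_apply_apply]

namespace ContinuousLinearMap

variable {H K : Type*} [NormedAddCommGroup H] [InnerProductSpace ℂ H] [CompleteSpace H]
  [NormedAddCommGroup K] [InnerProductSpace ℂ K] [CompleteSpace K]

lemma norm_sqrt_adjoint_comp_self_apply (Θ : H →L[ℂ] K) (x : H) :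
    ‖CFC.sqrt (Θ† ∘L Θ) x‖ = ‖Θ x‖ := by
  have hR : IsSelfAdjoint (CFC.sqrt (Θ† ∘L Θ)) := (CFC.sqrt_nonneg _).isSelfAdjoint
  rw [← sq_eq_sq₀ (norm_nonneg _) (norm_nonneg _), apply_norm_sq_eq_inner_adjoint_left,
    apply_norm_sq_eq_inner_adjoint_left, hR.adjoint_eq, ← mul_def,
    CFC.sqrt_mul_sqrt_self _ ((nonneg_iff_isPositive _).2 (isPositive_adjoint_comp_self Θ))]

lemma isUnit_adjoint_comp_self_of_lower_bound (Θ : H →L[ℂ] K) {A : ℝ} (hA : 0 < A)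
    (hlow : ∀ x, A * ‖x‖ ^ 2 ≤ ‖Θ x‖ ^ 2) : IsUnit (Θ† ∘L Θ) :=
  isUnit_of_forall_le_norm_inner_map _ (c := ⟨A, hA.le⟩) hA fun x => calc
    ‖x‖ ^ 2 * A ≤ ‖Θ x‖ ^ 2 := by rw [mul_comm]; exact hlow x
    _ = RCLike.re ⟪(Θ† ∘L Θ) x, x⟫ := apply_norm_sq_eq_inner_adjoint_left Θ x
    _ ≤ ‖⟪(Θ† ∘L Θ) x, x⟫‖ := RCLike.re_le_norm _

theorem exists_symmetric_equiv_norm_apply_eq (Θ : H →L[ℂ] K) {A : ℝ} (hA : 0 < A)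
    (hlow : ∀ x, A * ‖x‖ ^ 2 ≤ ‖Θ x‖ ^ 2) :
    ∃ V : H ≃L[ℂ] H, (∀ x y, ⟪V x, y⟫ = ⟪x, V y⟫) ∧ ∀ x, ‖Θ (V x)‖ = ‖x‖ := by
  obtain ⟨R, hR⟩ := (CFC.isUnit_sqrt_iff _ ((nonneg_iff_isPositive _).2
    (isPositive_adjoint_comp_self Θ))).2 (Θ.isUnit_adjoint_comp_self_of_lower_bound hA hlow)
  have hRsymm : (R : H →L[ℂ] H).IsSymmetric := by
    rw [hR]
    exact isSelfAdjoint_iff_isSymmetric.mp (CFC.sqrt_nonneg _).isSelfAdjoint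
  let U := ContinuousLinearEquiv.unitsEquiv ℂ H R
  refine ⟨U.symm, fun x y => ?_, fun x => ?_⟩
  · calc ⟪U.symm x, y⟫ = ⟪U.symm x, U (U.symm y)⟫ := by rw [U.apply_symm_apply]
      _ = ⟪U (U.symm x), U.symm y⟫ := (hRsymm _ _).symm
      _ = ⟪x, U.symm y⟫ := by rw [U.apply_symm_apply]
  · rw [← Θ.norm_sqrt_adjoint_comp_self_apply, ← hR]
    exact congrArg norm (U.apply_symm_apply x)

end ContinuousLinearMap

theorem contraction_similar_with_parseval_frame_general
    (H : Type*) [NormedAddCommGroup H] [InnerProductSpace ℂ H]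
    [CompleteSpace H]
    (T : H →L[ℂ] H) (m : ℕ) (v : Fin m → H) (A B : ℝ) (hA : 0 < A)
    (hframe : ∀ x : H,
      A * ‖x‖ ^ 2 ≤ ∑' p : Fin m × ℕ, ‖⟪x, (T ^ p.2) (v p.1)⟫‖ ^ 2 ∧
      ∑' p : Fin m × ℕ, ‖⟪x, (T ^ p.2) (v p.1)⟫‖ ^ 2 ≤ B * ‖x‖ ^ 2) :
    ∃ (Q : H →L[ℂ] H) (V : H ≃L[ℂ] H) (w : Fin m → H),
      ‖Q‖ ≤ 1 ∧ (∀ x : H, Q x = V (T (V.symm x))) ∧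
      ∀ x : H, ∑' p : Fin m × ℕ, ‖⟪x, (Q ^ p.2) (w p.1)⟫‖ ^ 2 = ‖x‖ ^ 2 := by
  have hsum := summable_norm_inner_sq_of_lower_bound hA fun x => (hframe x).1
  obtain ⟨V, hVsymm, hV⟩ := (analysisOperator _ B hsum fun x => (hframe x).2)
    |>.exists_symmetric_equiv_norm_apply_eq hA fun x => by
      rw [norm_analysisOperator_sq]; exact (hframe x).1
  have hparseval : ∀ x, ∑' p : Fin m × ℕ,
      ‖⟪x, (V.conjContinuousAlgEquiv T ^ p.2) (V (v p.1))⟫‖ ^ 2 = ‖x‖ ^ 2 := by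
    intro x
    simp_rw [V.conjContinuousAlgEquiv_pow_apply, ← hVsymm]
    rw [← hV x, norm_analysisOperator_sq]
  exact ⟨V.conjContinuousAlgEquiv T, V, fun i => V (v i),
    norm_le_one_of_parseval_iterates (w := fun i => V (v i)) hparseval, fun _ => rfl, hparseval⟩

/-- If `{Tⁿ vᵢ : i ∈ Fin m}` is a frame of iterations of an
infinite-dimensional separable Hilbert space `H`, then there is a contraction `Q`
similar to `T` admitting a Parseval frame of iterations with the same number `m` of
generators. -/
theorem contraction_similar_with_parseval_frame
    (H : Type*) [NormedAddCommGroup H] [InnerProductSpace ℂ H]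
    [CompleteSpace H] [TopologicalSpace.SeparableSpace H]
    (hinf : ¬ FiniteDimensional ℂ H)
    (T : H →L[ℂ] H) (m : ℕ) (v : Fin m → H) (A B : ℝ) (hA : 0 < A) (hB : 0 < B)
    (hframe : ∀ x : H,
      A * ‖x‖ ^ 2 ≤ ∑' p : Fin m × ℕ, ‖⟪x, (T ^ p.2) (v p.1)⟫‖ ^ 2 ∧
      ∑' p : Fin m × ℕ, ‖⟪x, (T ^ p.2) (v p.1)⟫‖ ^ 2 ≤ B * ‖x‖ ^ 2) :
    ∃ (Q : H →L[ℂ] H) (V : H ≃L[ℂ] H) (w : Fin m → H),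
      ‖Q‖ ≤ 1 ∧ (∀ x : H, Q x = V (T (V.symm x))) ∧
      ∀ x : H, ∑' p : Fin m × ℕ, ‖⟪x, (Q ^ p.2) (w p.1)⟫‖ ^ 2 = ‖x‖ ^ 2 :=
  contraction_similar_with_parseval_frame_general H T m v A B hA hframe
end
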